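/- Let A be an m×n real matrix and B an n×m real matrix. Let T and U be two disjoint subsets of {1,...,n} with |T| = j and |U| = n - j. Then the sum over all subsets S of U of size m - j of det(A_{[m], S∪T}) · det(B_{S∪T, [m]}) equals (-1)^j times the determinant of the (j+m)×(j+m) block matrix [[0_{j×j}, B_{T,[m]}], [A_{[m],T}, A_{[m],U} B_{U,[m]}]], where A_{[m],S∪T} denotes the submatrix of A consisting of the columns indexed by S∪T and B_{S∪T,[m]} the submatrix of B consisting of the rows indexed by S∪T. -/

import Mathlib

open Matrix

noncomputable def eigsDesc {n : ℕ} {A : Matrix (Fin n) (Fin n) ℝ} (hA : A.IsHermitian) : Fin n → ℝ :=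
  fun i => (hA.eigenvalues ∘ Tuple.sort hA.eigenvalues) i.rev

noncomputable def svDesc {m n : ℕ} (A : Matrix (Fin m) (Fin n) ℝ) : Fin n → ℝ :=
  fun i => Real.sqrt (eigsDesc (show (Aᵀ * A).IsHermitian by simpa using Matrix.isHermitian_conjTranspose_mul_self A) i)

noncomputable def slaterEntry {N L : ℕ} (U : Matrix (Fin N) (Fin L) ℝ) (o : Fin L → Bool) : ℝ :=
  if h : (Finset.univ.filter fun p => o p = true).card = N then
    (U.submatrix id ((Finset.univ.filter fun p => o p = true).orderEmbOfFin h)).det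
  else 0

noncomputable def compound {k : ℕ} (j : ℕ) (A : Matrix (Fin k) (Fin k) ℝ) :
    Matrix {s : Finset (Fin k) // s.card = j} {s : Finset (Fin k) // s.card = j} ℝ :=
  fun σ τ => (A.submatrix (σ.1.orderEmbOfFin σ.2) (τ.1.orderEmbOfFin τ.2)).det

def IsEigenvalue {ι : Type*} [Fintype ι] (M : Matrix ι ι ℝ) (lam : ℝ) : Prop :=
  ∃ v : ι → ℝ, v ≠ 0 ∧ M.mulVec v = lam • v

noncomputable def slaterReshape {N L : ℕ} (U : Matrix (Fin N) (Fin L) ℝ) (k : ℕ) :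
    Matrix (Fin (2 ^ k)) (Fin (2 ^ (L - k))) ℝ :=
  fun a b => slaterEntry U fun p =>
    if p.val < k then a.val.testBit p.val else b.val.testBit (p.val - k)

def leftBlock {N L : ℕ} (U : Matrix (Fin N) (Fin L) ℝ) (k : ℕ) (hk : k ≤ L) :
    Matrix (Fin N) (Fin k) ℝ :=
  U.submatrix id (fun i => Fin.castLE hk i)

def rightBlock {N L : ℕ} (U : Matrix (Fin N) (Fin L) ℝ) (k : ℕ) :
    Matrix (Fin N) (Fin (L - k)) ℝ :=
  U.submatrix id (fun i => ⟨k + i.val, by have := i.isLt; omega⟩)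

def shiftEmb (k L : ℕ) : Fin (L - k) ↪ Fin L :=
  ⟨fun i => ⟨k + i.val, by have := i.isLt; omega⟩, by
    intro a b h
    have : k + a.val = k + b.val := congrArg Fin.val h
    exact Fin.ext (by omega)⟩

noncomputable def Cmat {N L : ℕ} (k : ℕ) (hk : k ≤ L) (U : Matrix (Fin N) (Fin L) ℝ) (j : ℕ) :
    Matrix {s : Finset (Fin k) // s.card = j} {s : Finset (Fin (L - k)) // s.card = N - j} ℝ :=
  fun σ ρ => slaterEntry U fun p =>
    decide (p ∈ σ.1.map (Fin.castLEEmb hk) ∪ ρ.1.map (shiftEmb k L))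

def blockSym {m n : ℕ} (A : Matrix (Fin m) (Fin n) ℝ) : Matrix (Fin (m + n)) (Fin (m + n)) ℝ :=
  (Matrix.fromBlocks 0 A Aᵀ 0).submatrix finSumFinEquiv.symm finSumFinEquiv.symm

/-!
Write `mulOn W A B` for `A * B` with the inner index restricted to `W`. Cauchy–Binet reads
`det (mulOn V A B) = ∑ det (mulOn W A B)` over the `W ⊆ V` with as many elements as `A` has rows.

The bordered matrix `[[0, B_T], [A_T, A_U B_U]]` is `[[I, 0, 0], [0, A_T, A]] * [[0, B_T], [I, 0], [0, B]]`
with the middle index restricted to the two identity blocks and `U`. In its Cauchy–Binet expansion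
every `W` that misses a column of an identity block gives a zero row or column, so only the
`W = blocks ⊔ S` with `S ⊆ U`, `|S| = m - j` survive, each contributing
`det [[0, B_T], [A_T, A_S B_S]]`. This matrix factors through square matrices as
`[[I, 0], [0, (A_T | A_S)]] * [[0, B_T], [I, 0], [0, B_S]]`, so its determinant is
`(-1)^j det (A_T B_T + A_S B_S) = (-1)^j det A_{S∪T} det B_{S∪T}`.
-/

open Finset

namespace Matrix

variable {R : Type*} [CommRing R] {κ κ' ι : Type*}

def mulOn (W : Finset ι) (A : Matrix κ ι R) (B : Matrix ι κ' R) : Matrix κ κ' R :=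
  of fun i k => ∑ x ∈ W, A i x * B x k

theorem mulOn_union [DecidableEq ι] {s t : Finset ι} (h : Disjoint s t) (A : Matrix κ ι R)
    (B : Matrix ι κ' R) : mulOn (s ∪ t) A B = mulOn s A B + mulOn t A B := by
  ext i k
  simp [mulOn, sum_union h]

theorem mulOn_map {ν : Type*} [Fintype ν] (e : ν ↪ ι) (A : Matrix κ ι R) (B : Matrix ι κ' R) :
    mulOn (univ.map e) A B = A.submatrix id e * B.submatrix e id := by
  ext i k
  simp [mulOn, mul_apply]

theorem submatrix_orderEmbOfFin_mul_submatrix [LinearOrder ι] (W : Finset ι) {k : ℕ}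
    (hW : W.card = k) (A : Matrix κ ι R) (B : Matrix ι κ' R) :
    A.submatrix id (W.orderEmbOfFin hW) * B.submatrix (W.orderEmbOfFin hW) id = mulOn W A B := by
  simpa using (mulOn_map (W.orderEmbOfFin hW).toEmbedding A B).symm

variable [Fintype κ] [DecidableEq κ]

theorem det_mulOn_eq_sum_piFinset [DecidableEq ι] (W : Finset ι) (A : Matrix κ ι R)
    (B : Matrix ι κ R) :
    det (mulOn W A B) =
      ∑ r ∈ Fintype.piFinset fun _ => W, (∏ k, B (r k) k) * det (A.submatrix id r) := by
  calc det (mulOn W A B)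
    _ = detRowAlternating fun k => ∑ x ∈ W, B x k • fun i => A i x := by
      rw [← det_transpose]
      congr 1
      ext k i
      simp [mulOn, mul_comm]
    _ = ∑ r ∈ Fintype.piFinset fun _ => W,
          detRowAlternating fun k => B (r k) k • fun i => A i (r k) :=
      detRowAlternating.toMultilinearMap.map_sum_finset _ _
    _ = _ := by
      refine sum_congr rfl fun r _ => ?_
      rw [detRowAlternating.map_smul_univ, smul_eq_mul, ← det_transpose (A.submatrix id r)]
      rfl

theorem det_mulOn_eq_sum_powersetCard [DecidableEq ι] (V : Finset ι) (A : Matrix κ ι R)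
    (B : Matrix ι κ R) :
    det (mulOn V A B) = ∑ W ∈ V.powersetCard (Fintype.card κ), det (mulOn W A B) := by
  set F : (κ → ι) → R := fun r => (∏ k, B (r k) k) * det (A.submatrix id r)
  have hF : ∀ r, ¬ Function.Injective r → F r = 0 := by
    intro r hr
    obtain ⟨k, k', hkk', hne⟩ : ∃ k k', r k = r k' ∧ k ≠ k' := by
      simpa [Function.Injective] using hr
    change (∏ k, B (r k) k) * det (A.submatrix id r) = 0
    rw [det_zero_of_column_eq hne fun i => by simp only [submatrix_apply, id, hkk'], mul_zero]
  have hinj : ∀ W : Finset ι, det (mulOn W A B) =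
      ∑ r ∈ (Fintype.piFinset fun _ => W).filter Function.Injective, F r := by
    intro W
    rw [det_mulOn_eq_sum_piFinset, sum_filter_of_ne fun r _ h => not_imp_comm.mp (hF r) h]
  rw [hinj, ← sum_fiberwise_of_maps_to (g := fun r => univ.image r)
    (t := V.powersetCard (Fintype.card κ))]
  · refine sum_congr rfl fun W hW => ?_
    rw [hinj, filter_filter]
    refine sum_congr (Finset.ext fun r => ?_) fun _ _ => rfl
    obtain ⟨hWV, hWcard⟩ := mem_powersetCard.mp hW
    simp only [mem_filter, Fintype.mem_piFinset]
    constructor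
    · rintro ⟨-, hr, rfl⟩
      exact ⟨fun k => mem_image_of_mem r (mem_univ k), hr⟩
    · rintro ⟨hrW, hr⟩
      have himage : univ.image r = W :=
        eq_of_subset_of_card_le (fun x hx => by obtain ⟨k, -, rfl⟩ := mem_image.mp hx; exact hrW k)
          (by rw [card_image_of_injective _ hr, hWcard, card_univ])
      exact ⟨fun k => hWV (hrW k), hr, himage⟩
  · intro r hr
    simp only [mem_filter, Fintype.mem_piFinset] at hr
    refine mem_powersetCard.mpr ⟨fun x hx => ?_, by rw [card_image_of_injective _ hr.2, card_univ]⟩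
    obtain ⟨k, -, rfl⟩ := mem_image.mp hx
    exact hr.1 k

theorem det_mulOn_eq_zero_of_row {W : Finset ι} {A : Matrix κ ι R} (B : Matrix ι κ R) {i : κ}
    (hi : ∀ x ∈ W, A i x = 0) : det (mulOn W A B) = 0 :=
  det_eq_zero_of_row_eq_zero i fun k => sum_eq_zero fun x hx => by simp [hi x hx]

theorem det_mulOn_eq_zero_of_column {W : Finset ι} (A : Matrix κ ι R) {B : Matrix ι κ R} {k : κ}
    (hk : ∀ x ∈ W, B x k = 0) : det (mulOn W A B) = 0 :=
  det_eq_zero_of_column_eq_zero k fun i => sum_eq_zero fun x hx => by simp [hk x hx]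

theorem det_fromBlocks_zero₁₁_mulOn {p : Type*} [Fintype p] [DecidableEq p] [DecidableEq ι]
    (X : Matrix κ p R) (Y : Matrix p κ R) (A : Matrix κ ι R) (B : Matrix ι κ R) (V : Finset ι)
    (hp : Fintype.card p ≤ Fintype.card κ) :
    det (fromBlocks 0 Y X (mulOn V A B)) =
      ∑ S ∈ V.powersetCard (Fintype.card κ - Fintype.card p),
        det (fromBlocks 0 Y X (mulOn S A B)) := by
  let P : Matrix (p ⊕ κ) ((p ⊕ p) ⊕ ι) R := fromBlocks (fromCols 1 0) 0 (fromCols 0 X) A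
  let Q : Matrix ((p ⊕ p) ⊕ ι) (p ⊕ κ) R := fromBlocks (fromRows 0 1) (fromRows Y 0) 0 B
  let φ : Finset ι → Finset ((p ⊕ p) ⊕ ι) := fun S => univ.disjSum S
  have hPQ : ∀ S, mulOn (φ S) P Q = fromBlocks 0 Y X (mulOn S A B) := by
    intro S
    ext (i | i) (k | k) <;> simp [φ, P, Q, mulOn, sum_disjSum, one_apply]
  rw [← hPQ, det_mulOn_eq_sum_powersetCard, Fintype.card_sum]
  symm
  refine sum_of_injOn φ (fun S _ S' _ h => by simpa [φ] using h) (fun S hS => ?_)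
    (fun W hW hWφ => ?_) fun S _ => by rw [hPQ]
  · obtain ⟨hSV, hScard⟩ := mem_powersetCard.mp hS
    refine mem_powersetCard.mpr ⟨disjSum_mono_right _ hSV, ?_⟩
    simp only [φ, card_disjSum, card_univ, Fintype.card_sum]
    omega
  · obtain ⟨hWV, hWcard⟩ := mem_powersetCard.mp hW
    -- unless `W` contains both identity blocks, `P` has a zero row or `Q` a zero column on `W`
    by_cases hleft : W.toLeft = univ
    · refine absurd ⟨W.toRight, ?_, ?_⟩ hWφ
      · have hcard := card_toLeft_add_card_toRight (u := W)
        rw [hleft, card_univ, Fintype.card_sum, hWcard] at hcard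
        exact mem_powersetCard.mpr ⟨(subset_disjSum.mp hWV).2, by omega⟩
      · simp only [φ, ← hleft, toLeft_disjSum_toRight]
    · obtain ⟨a | a, ha⟩ : ∃ z, z ∉ W.toLeft := by
        by_contra! h
        exact hleft (eq_univ_iff_forall.mpr h)
      · refine det_mulOn_eq_zero_of_row Q (i := Sum.inl a) fun x hx => ?_
        rcases x with (b | b) | x <;> simp [P, one_apply]
        rintro rfl
        exact absurd (mem_toLeft.mpr hx) ha
      · refine det_mulOn_eq_zero_of_column P (k := Sum.inl a) fun x hx => ?_
        rcases x with (b | b) | x <;> simp [Q, one_apply]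
        rintro rfl
        exact absurd (mem_toLeft.mpr hx) ha

theorem det_fromBlocks_zero₁₁_of_mul_eq_one {p : Type*} [Fintype p] [DecidableEq p]
    (Y : Matrix p κ R) (E : Matrix κ p R) (N : Matrix κ κ R) {F : Matrix p κ R}
    (hFE : F * E = 1) (hFN : F * N = 0) :
    det (fromBlocks 0 Y E N) = (-1) ^ Fintype.card p * det (E * Y + N) := by
  have hreduce : fromBlocks 1 (-F) 0 1 * fromBlocks 0 Y E N * fromBlocks 1 Y 0 1 =
      fromBlocks (-1) 0 E (E * Y + N) := by
    simp [fromBlocks_multiply, Matrix.neg_mul, hFE, hFN]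
  have hunit : ∀ G : Matrix p κ R, det (fromBlocks 1 G 0 (1 : Matrix κ κ R)) = 1 := fun G => by
    rw [det_fromBlocks_zero₂₁, det_one, det_one, one_mul]
  have := congrArg det hreduce
  rwa [det_mul, det_mul, hunit, hunit, one_mul, mul_one, det_fromBlocks_zero₁₂, det_neg,
    det_one, mul_one] at this

theorem det_fromBlocks_zero₁₁_mul {p q : Type*} [Fintype p] [DecidableEq p] [Fintype q]
    [DecidableEq q] (X : Matrix κ p R) (Y : Matrix p κ R) (A : Matrix κ q R) (B : Matrix q κ R)
    (hcard : Fintype.card p + Fintype.card q = Fintype.card κ) :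
    det (fromBlocks 0 Y X (A * B)) = (-1) ^ Fintype.card p * det (X * Y + A * B) := by
  let e : p ⊕ q ≃ κ := Fintype.equivOfCardEq (by rw [Fintype.card_sum, hcard])
  let C := (fromCols X A).submatrix id e.symm
  let E := (fromRows (1 : Matrix p p R) 0).submatrix e.symm id
  let N := (fromRows (0 : Matrix p κ R) B).submatrix e.symm id
  let F := (fromCols (1 : Matrix p p R) 0).submatrix id e.symm
  have hfactor : fromBlocks 0 Y X (A * B) = fromBlocks 1 0 0 C * fromBlocks 0 Y E N := by
    simp [C, E, N, fromBlocks_multiply, submatrix_mul_equiv, fromCols_mul_fromRows]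
  have hFE : F * E = 1 := by simp [F, E, submatrix_mul_equiv, fromCols_mul_fromRows]
  have hFN : F * N = 0 := by simp [F, N, submatrix_mul_equiv, fromCols_mul_fromRows]
  have hEYN : E * Y + N = (fromRows Y B).submatrix e.symm id := by
    ext i k
    rcases h : e.symm i with a | b <;> simp [E, N, mul_apply, h, one_apply]
  rw [hfactor, det_mul, det_fromBlocks_zero₁₂, det_one, one_mul,
    det_fromBlocks_zero₁₁_of_mul_eq_one Y E N hFE hFN, hEYN, mul_left_comm, ← det_mul,
    submatrix_mul_equiv, fromCols_mul_fromRows, submatrix_id_id]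

theorem det_submatrix_union_mul_det_submatrix_union [LinearOrder ι] {m j : ℕ}
    (A : Matrix (Fin m) ι R) (B : Matrix ι (Fin m) R) {S T : Finset ι} (hST : Disjoint S T)
    (hS : S.card = m - j) (hT : T.card = j) (h : (S ∪ T).card = m) :
    det (A.submatrix id ((S ∪ T).orderEmbOfFin h)) *
        det (B.submatrix ((S ∪ T).orderEmbOfFin h) id) =
      (-1) ^ j * det (fromBlocks 0 (B.submatrix (T.orderEmbOfFin hT) id)
        (A.submatrix id (T.orderEmbOfFin hT)) (mulOn S A B)) := by
  have hjm : j + (m - j) = m := by rw [card_union_of_disjoint hST, hS, hT] at h; omega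
  set t := T.orderEmbOfFin hT
  set s := S.orderEmbOfFin hS
  calc _ = det (mulOn (S ∪ T) A B) := by
        rw [← det_mul, submatrix_orderEmbOfFin_mul_submatrix]
    _ = det (A.submatrix id t * B.submatrix t id + A.submatrix id s * B.submatrix s id) := by
        rw [union_comm, mulOn_union hST.symm, submatrix_orderEmbOfFin_mul_submatrix,
          submatrix_orderEmbOfFin_mul_submatrix]
    _ = (-1) ^ j * det (fromBlocks 0 (B.submatrix t id) (A.submatrix id t)
          (A.submatrix id s * B.submatrix s id)) := by
        rw [det_fromBlocks_zero₁₁_mul _ _ _ _ (by simpa using hjm), Fintype.card_fin, ← mul_assoc,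
          ← mul_pow, neg_one_mul, neg_neg, one_pow, one_mul]
    _ = _ := by rw [submatrix_orderEmbOfFin_mul_submatrix]

end Matrix

theorem refined_cauchy_binet {m n j : ℕ} (hjm : j ≤ m)
    (A : Matrix (Fin m) (Fin n) ℝ) (B : Matrix (Fin n) (Fin m) ℝ)
    (T U : Finset (Fin n)) (hTU : Disjoint T U)
    (hT : T.card = j) (hU : U.card = n - j) :
    ∑ S ∈ (U.powersetCard (m - j)).attach,
      (A.submatrix id ((S.1 ∪ T).orderEmbOfFin (by
        obtain ⟨hsub, hcard⟩ := Finset.mem_powersetCard.mp S.2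
        rw [Finset.card_union_of_disjoint
          (Finset.disjoint_of_subset_left hsub hTU.symm), hcard, hT]
        omega))).det *
      (B.submatrix ((S.1 ∪ T).orderEmbOfFin (by
        obtain ⟨hsub, hcard⟩ := Finset.mem_powersetCard.mp S.2
        rw [Finset.card_union_of_disjoint
          (Finset.disjoint_of_subset_left hsub hTU.symm), hcard, hT]
        omega)) id).det
    = (-1 : ℝ) ^ j *
      (Matrix.fromBlocks (0 : Matrix (Fin j) (Fin j) ℝ)
        (B.submatrix (T.orderEmbOfFin hT) id)
        (A.submatrix id (T.orderEmbOfFin hT))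
        (A.submatrix id (U.orderEmbOfFin hU) * B.submatrix (U.orderEmbOfFin hU) id)).det := by
  set t := T.orderEmbOfFin hT
  calc _ = ∑ S ∈ (U.powersetCard (m - j)).attach, (-1) ^ j *
        det (fromBlocks 0 (B.submatrix t id) (A.submatrix id t) (mulOn S.1 A B)) :=
      sum_congr rfl fun S _ =>
        have hS := mem_powersetCard.mp S.2
        det_submatrix_union_mul_det_submatrix_union A B (hTU.symm.mono_left hS.1) hS.2 hT _
    _ = (-1) ^ j * ∑ S ∈ U.powersetCard (m - j),
        det (fromBlocks 0 (B.submatrix t id) (A.submatrix id t) (mulOn S A B)) := by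
      rw [← mul_sum, sum_attach _ fun S =>
        det (fromBlocks 0 (B.submatrix t id) (A.submatrix id t) (mulOn S A B))]
    _ = _ := by
      rw [submatrix_orderEmbOfFin_mul_submatrix,
        det_fromBlocks_zero₁₁_mulOn _ _ _ _ _ (by simpa using hjm), Fintype.card_fin,
        Fintype.card_fin]
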